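/- For gradient descent w_{t+1} = w_t − η∇g(w_t) on an L-Lipschitz, q-quasar-convex function g with minimizer w* and ‖w₁ − w*‖ ≤ D, the average suboptimality over T steps satisfies (1/T)·Σ_{t=1}^{T} (g(w_t) − g(w*)) ≤ D²/(2ηqT) + ηL²/(2q). -/

import Mathlib

open RealInnerProductSpace

/-!
Track the squared distance `r t = ‖w t - w*‖²`. Expanding one gradient step gives
`r (t+1) = r t - 2η⟪∇g(w t), w t - w*⟫ + η²‖∇g(w t)‖²`, and quasar-convexity bounds the inner
product below by `q (g (w t) - g w*)`. Hence `2ηq (g (w t) - g w*) ≤ r t - r (t+1) + η²L²`;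
summing telescopes to `2ηq Σ (g (w t) - g w*) ≤ r 1 + Tη²L² ≤ D² + Tη²L²`.
-/

section

variable {E : Type*} [NormedAddCommGroup E] [InnerProductSpace ℝ E]

lemma norm_sub_smul_sub_sq (x v y : E) (η : ℝ) :
    ‖x - η • v - y‖ ^ 2 = ‖x - y‖ ^ 2 - 2 * η * ⟪v, x - y⟫ + η ^ 2 * ‖v‖ ^ 2 := by
  rw [sub_right_comm, norm_sub_sq_real, real_inner_smul_right, real_inner_comm, norm_smul,
    mul_pow, Real.norm_eq_abs, sq_abs]
  ring

lemma mul_sub_le_inner_of_quasar {g : E → ℝ} {v x y : E} {q : ℝ} (hq : 0 < q)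
    (h : g x + (1 / q) * ⟪v, y - x⟫ ≤ g y) : q * (g x - g y) ≤ ⟪v, x - y⟫ := by
  rw [← neg_sub x y, inner_neg_right] at h
  have := mul_le_mul_of_nonneg_left h hq.le
  field_simp at this
  linarith

lemma gradient_step_descent {g : E → ℝ} {v x y : E} {q η L : ℝ} (hq : 0 < q) (hη : 0 < η)
    (hv : ‖v‖ ≤ L) (h : g x + (1 / q) * ⟪v, y - x⟫ ≤ g y) :
    2 * η * q * (g x - g y) ≤ ‖x - y‖ ^ 2 - ‖x - η • v - y‖ ^ 2 + η ^ 2 * L ^ 2 := by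
  have hinner := mul_sub_le_inner_of_quasar hq h
  have hvL : ‖v‖ ^ 2 ≤ L ^ 2 := pow_le_pow_left₀ (norm_nonneg v) hv 2
  rw [norm_sub_smul_sub_sq]
  nlinarith [sq_nonneg η]

end

lemma Finset.sum_Icc_le_of_le_sub_succ {a r : ℕ → ℝ} {c : ℝ} (hr : ∀ t, 0 ≤ r t)
    (h : ∀ t, a t ≤ r t - r (t + 1) + c) (T : ℕ) :
    ∑ t ∈ Finset.Icc 1 T, a t ≤ r 1 + T * c := by
  have htelescope : ∑ t ∈ Finset.Icc 1 T, (r t - r (t + 1)) ≤ r 1 := by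
    rcases Nat.eq_zero_or_pos T with rfl | hT
    · simpa using hr 1
    · have h := Finset.sum_Icc_sub hT r
      rw [Finset.sum_sub_distrib] at h ⊢
      linarith [hr (T + 1)]
  calc ∑ t ∈ Finset.Icc 1 T, a t
      ≤ ∑ t ∈ Finset.Icc 1 T, (r t - r (t + 1) + c) := Finset.sum_le_sum fun t _ => h t
    _ = ∑ t ∈ Finset.Icc 1 T, (r t - r (t + 1)) + T * c := by simp [Finset.sum_add_distrib]
    _ ≤ r 1 + T * c := by gcongr

theorem stmt_5_general {d : ℕ} (g : EuclideanSpace ℝ (Fin d) → ℝ)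
    (g' : EuclideanSpace ℝ (Fin d) → EuclideanSpace ℝ (Fin d))
    (L : ℝ) (hLip : ∀ w, ‖g' w‖ ≤ L)
    (q : ℝ) (hq0 : 0 < q)
    (wstar : EuclideanSpace ℝ (Fin d))
    (hquasar : ∀ w, g w + (1 / q) * ⟪g' w, wstar - w⟫ ≤ g wstar)
    (η : ℝ) (hη : 0 < η) (T : ℕ)
    (D : ℝ)
    (w : ℕ → EuclideanSpace ℝ (Fin d))
    (hinit : ‖w 1 - wstar‖ ≤ D)
    (hupdate : ∀ t, w (t + 1) = w t - η • g' (w t)) :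
    (1 / (T : ℝ)) * ∑ t ∈ Finset.Icc 1 T, (g (w t) - g wstar) ≤
      D ^ 2 / (2 * η * q * T) + η * L ^ 2 / (2 * q) := by
  have hstep : ∀ t, 2 * η * q * (g (w t) - g wstar) ≤
      ‖w t - wstar‖ ^ 2 - ‖w (t + 1) - wstar‖ ^ 2 + η ^ 2 * L ^ 2 := fun t => by
    simpa only [hupdate t] using gradient_step_descent hq0 hη (hLip (w t)) (hquasar (w t))
  have hsum : 2 * η * q * ∑ t ∈ Finset.Icc 1 T, (g (w t) - g wstar) ≤
      D ^ 2 + T * (η ^ 2 * L ^ 2) := by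
    rw [Finset.mul_sum]
    refine (Finset.sum_Icc_le_of_le_sub_succ (fun t => sq_nonneg _) hstep T).trans ?_
    gcongr
  rcases Nat.eq_zero_or_pos T with rfl | hT
  -- for `T = 0` both sides involve a division by zero, which Lean evaluates to `0`
  · simp only [CharP.cast_eq_zero, div_zero, zero_mul, mul_zero, zero_add]
    positivity
  have hT' : (0 : ℝ) < T := by exact_mod_cast hT
  set S := ∑ t ∈ Finset.Icc 1 T, (g (w t) - g wstar)
  calc (1 / (T : ℝ)) * S = 2 * η * q * S / (2 * η * q * T) := by field_simp
    _ ≤ (D ^ 2 + T * (η ^ 2 * L ^ 2)) / (2 * η * q * T) := by gcongr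
    _ = D ^ 2 / (2 * η * q * T) + η * L ^ 2 / (2 * q) := by field_simp

/-- Gradient descent `w_{t+1} = w_t − η∇g(w_t)` on an `L`-Lipschitz, `q`-quasar-convex
function `g` with minimizer `w*` and `‖w₁ − w*‖ ≤ D` satisfies
`(1/T)·Σ_{t=1}^{T} (g(w_t) − g(w*)) ≤ D²/(2ηqT) + ηL²/(2q)`. -/
theorem stmt_5 {d : ℕ} (g : EuclideanSpace ℝ (Fin d) → ℝ)
    (g' : EuclideanSpace ℝ (Fin d) → EuclideanSpace ℝ (Fin d))
    (hgrad : ∀ w, HasGradientAt g (g' w) w)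
    (L : ℝ) (hL : 0 ≤ L) (hLip : ∀ w, ‖g' w‖ ≤ L)
    (q : ℝ) (hq0 : 0 < q) (hq1 : q ≤ 1)
    (wstar : EuclideanSpace ℝ (Fin d)) (hmin : ∀ w, g wstar ≤ g w)
    (hquasar : ∀ w, g w + (1 / q) * ⟪g' w, wstar - w⟫ ≤ g wstar)
    (η : ℝ) (hη : 0 < η) (T : ℕ) (hT : 1 ≤ T)
    (D : ℝ) (hD : 0 ≤ D)
    (w : ℕ → EuclideanSpace ℝ (Fin d))
    (hinit : ‖w 1 - wstar‖ ≤ D)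
    (hupdate : ∀ t, w (t + 1) = w t - η • g' (w t)) :
    (1 / (T : ℝ)) * ∑ t ∈ Finset.Icc 1 T, (g (w t) - g wstar) ≤
      D ^ 2 / (2 * η * q * T) + η * L ^ 2 / (2 * q) :=
  stmt_5_general g g' L hLip q hq0 wstar hquasar η hη T D w hinit hupdate
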